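/- A word w lies in C(m(m-1)⋯1) if and only if every entry in the first m rows of P(w) is at most m. -/

import Mathlib

/-
By Knuth's theorem, `w ∈ C(u)` iff `P(uw) = P(wu)`. Knuth's theorem itself follows from two facts:
row insertion of Knuth-related triples gives equal tableaux (Knuth's lemma, row by row: the bumped
letters again form equal or Knuth-related triples), and every word is Knuth-equivalent to the
reading word of its insertion tableau.

For `u = m ⋯ 1` and a word `w` with positive letters, inserting `w` into the column `P(u)` never
disturbs it, so `P(uw)` is `P(w)` with the column `1, …, m` prepended. On the other side,
`P(wu)` inserts `m, m - 1, …, 1` into `P(w)`: a row whose entries are at most `m` receives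
`m, …, k`, keeps `k` and passes `m, …, k + 1` down, i.e. gets `k` prepended; a row containing an
entry larger than `m` absorbs every letter by bumping and does not grow. Hence the two tableaux
agree exactly when the first `m` rows of `P(w)` are bounded by `m`.
-/

namespace Plactic

/-- Insert `x` into a weakly increasing row, returning the new row and the bumped entry. -/
def rowInsert (x : ℕ) : List ℕ → List ℕ × Option ℕ
  | [] => ([x], none)
  | y :: ys =>
    if x < y then (x :: ys, some y)
    else
      let p := rowInsert x ys
      (y :: p.1, p.2)

/-- RSK insertion of `x` into a tableau given as a list of rows. -/
def tInsert (x : ℕ) : List (List ℕ) → List (List ℕ)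
  | [] => [[x]]
  | r :: rs =>
    match rowInsert x r with
    | (r', none) => r' :: rs
    | (r', some y) => r' :: tInsert y rs

/-- The RSK insertion tableau of a word. -/
def P (w : List ℕ) : List (List ℕ) := w.foldl (fun t x => tInsert x t) []

/-- The `i`-th row (0-indexed) of the insertion tableau of `w`. -/
def row (w : List ℕ) (i : ℕ) : List ℕ := (P w).getD i []

/-- The `j`-th column (0-indexed) of a tableau, read top to bottom. -/
def col (T : List (List ℕ)) (j : ℕ) : List ℕ := T.filterMap (fun r => r[j]?)

/-- An elementary Knuth transposition. -/
inductive KStep : List ℕ → List ℕ → Prop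
  | k1 (x y : List ℕ) (a b c : ℕ) : a ≤ b → b < c →
      KStep (x ++ [a, c, b] ++ y) (x ++ [c, a, b] ++ y)
  | k2 (x y : List ℕ) (a b c : ℕ) : a < b → b ≤ c →
      KStep (x ++ [b, a, c] ++ y) (x ++ [b, c, a] ++ y)

/-- Knuth equivalence: the equivalence relation generated by Knuth transpositions. -/
def KEquiv : List ℕ → List ℕ → Prop := Relation.EqvGen KStep

/-- The centralizer of `u` in the plactic monoid. -/
def Cent (u : List ℕ) : Set (List ℕ) := {w | KEquiv (u ++ w) (w ++ u)}

section RowInsert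

variable {x y r : ℕ} {R R' S : List ℕ} {o : Option ℕ}

@[simp] lemma rowInsert_nil (x : ℕ) : rowInsert x [] = ([x], none) := rfl

@[simp] lemma rowInsert_cons_of_lt (h : x < r) : rowInsert x (r :: S) = (x :: S, some r) := by
  simp [rowInsert, h]

@[simp] lemma rowInsert_cons_of_le (h : r ≤ x) :
    rowInsert x (r :: S) = (r :: (rowInsert x S).1, (rowInsert x S).2) := by
  simp [rowInsert, not_lt.2 h]

lemma rowInsert_of_forall_le (h : ∀ r ∈ R, r ≤ x) : rowInsert x R = (R ++ [x], none) := by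
  induction R with
  | nil => rfl
  | cons r R ih =>
    rw [rowInsert_cons_of_le (h r (by simp)), ih fun s hs => h s (by simp [hs])]
    rfl

lemma rowInsert_perm (x : ℕ) (R : List ℕ) :
    ((rowInsert x R).2.toList ++ (rowInsert x R).1).Perm (x :: R) := by
  induction R with
  | nil => rfl
  | cons r R ih =>
    rcases lt_or_ge x r with h | h
    · simpa [rowInsert_cons_of_lt h] using List.Perm.swap x r R
    · rw [rowInsert_cons_of_le h]
      exact List.perm_middle.trans ((ih.cons r).trans (List.Perm.swap x r R))

lemma mem_of_mem_rowInsert (h : rowInsert x R = (R', o)) (hy : y ∈ R') : y = x ∨ y ∈ R := by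
  have hperm := rowInsert_perm x R
  rw [h] at hperm
  exact List.mem_cons.1 (hperm.subset (List.mem_append_right _ hy))

lemma lt_of_rowInsert_eq_some (h : rowInsert x R = (R', some y)) : x < y := by
  induction R generalizing R' with
  | nil => simp at h
  | cons r R ih =>
    rcases lt_or_ge x r with hxr | hxr
    · rw [rowInsert_cons_of_lt hxr, Prod.mk.injEq, Option.some_inj] at h
      exact h.2 ▸ hxr
    · rw [rowInsert_cons_of_le hxr, Prod.mk.injEq] at h
      exact ih (Prod.ext rfl h.2)

lemma mem_of_rowInsert_eq_some (h : rowInsert x R = (R', some y)) : y ∈ R := by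
  have hperm := rowInsert_perm x R
  rw [h] at hperm
  exact (List.mem_cons.1 (hperm.subset (by simp))).resolve_left (lt_of_rowInsert_eq_some h).ne'

lemma self_mem_of_rowInsert_eq_some (h : rowInsert x R = (R', some y)) : x ∈ R' := by
  have hperm := rowInsert_perm x R
  rw [h] at hperm
  have hx := hperm.symm.subset (List.mem_cons_self (a := x) (l := R))
  rw [Option.toList_some, List.singleton_append, List.mem_cons] at hx
  exact hx.resolve_left (lt_of_rowInsert_eq_some h).ne

lemma length_of_rowInsert_eq_some (h : rowInsert x R = (R', some y)) : R'.length = R.length := by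
  have hlen := (rowInsert_perm x R).length_eq
  rw [h] at hlen
  simpa [add_comm] using hlen

lemma le_of_rowInsert_eq_some (hR : R.Pairwise (· ≤ ·)) (h : rowInsert x R = (R', some y))
    (hr : r ∈ R) (hxr : x < r) : y ≤ r := by
  induction R generalizing R' with
  | nil => simp at hr
  | cons s R ih =>
    rw [List.pairwise_cons] at hR
    rcases lt_or_ge x s with hxs | hxs
    · rw [rowInsert_cons_of_lt hxs, Prod.mk.injEq, Option.some_inj] at h
      rcases List.mem_cons.1 hr with rfl | hr
      exacts [h.2.ge, h.2 ▸ hR.1 r hr]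
    · rw [rowInsert_cons_of_le hxs, Prod.mk.injEq] at h
      rcases List.mem_cons.1 hr with rfl | hr
      exacts [absurd hxs (not_le.2 hxr), ih hR.2 (Prod.ext rfl h.2) hr]

lemma exists_rowInsert_eq_some (hr : r ∈ R) (hxr : x < r) :
    ∃ R' y, rowInsert x R = (R', some y) := by
  induction R with
  | nil => simp at hr
  | cons s R ih =>
    rcases lt_or_ge x s with hxs | hxs
    · exact ⟨x :: R, s, rowInsert_cons_of_lt hxs⟩
    · rcases List.mem_cons.1 hr with rfl | hr
      · exact absurd hxs (not_le.2 hxr)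
      obtain ⟨R', y, h⟩ := ih hr
      exact ⟨s :: R', y, by rw [rowInsert_cons_of_le hxs, h]⟩

lemma forall_le_of_rowInsert_eq_none (h : rowInsert x R = (R', none)) : ∀ r ∈ R, r ≤ x :=
  fun _ hr => not_lt.1 fun hxr => by
    obtain ⟨R'', y, h'⟩ := exists_rowInsert_eq_some hr hxr
    simp [h] at h'

lemma pairwise_rowInsert (hR : R.Pairwise (· ≤ ·)) (h : rowInsert x R = (R', o)) :
    R'.Pairwise (· ≤ ·) := by
  induction R generalizing R' o with
  | nil =>
    rw [rowInsert_nil, Prod.mk.injEq] at h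
    simp [← h.1]
  | cons r R ih =>
    rw [List.pairwise_cons] at hR
    rcases lt_or_ge x r with hxr | hxr
    · rw [rowInsert_cons_of_lt hxr, Prod.mk.injEq] at h
      rw [← h.1]
      exact List.pairwise_cons.2 ⟨fun s hs => hxr.le.trans (hR.1 s hs), hR.2⟩
    · rw [rowInsert_cons_of_le hxr, Prod.mk.injEq] at h
      rw [← h.1]
      refine List.pairwise_cons.2 ⟨fun s hs => ?_, ih hR.2 rfl⟩
      rcases mem_of_mem_rowInsert rfl hs with rfl | hs
      exacts [hxr, hR.1 s hs]

end RowInsert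

def rowInsertWord : List ℕ → List ℕ → List ℕ × List ℕ
  | [], R => (R, [])
  | x :: v, R =>
    let p := rowInsertWord v (rowInsert x R).1
    (p.1, (rowInsert x R).2.toList ++ p.2)

def tInsertWord (v : List ℕ) (T : List (List ℕ)) : List (List ℕ) :=
  v.foldl (fun t x => tInsert x t) T

section InsertWord

variable {v : List ℕ} {R : List ℕ}

lemma pairwise_rowInsertWord (hR : R.Pairwise (· ≤ ·)) :
    (rowInsertWord v R).1.Pairwise (· ≤ ·) := by
  induction v generalizing R with
  | nil => exact hR
  | cons x v ih => exact ih (pairwise_rowInsert hR rfl)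

lemma rowInsertWord_append (v w R : List ℕ) :
    rowInsertWord (v ++ w) R = ((rowInsertWord w (rowInsertWord v R).1).1,
      (rowInsertWord v R).2 ++ (rowInsertWord w (rowInsertWord v R).1).2) := by
  induction v generalizing R with
  | nil => simp [rowInsertWord]
  | cons x v ih => simp [rowInsertWord, ih]

lemma rowInsertWord_cons_of_le {r : ℕ} (h : ∀ x ∈ v, r ≤ x) :
    rowInsertWord v (r :: R) = (r :: (rowInsertWord v R).1, (rowInsertWord v R).2) := by
  induction v generalizing R with
  | nil => rfl
  | cons x v ih =>
    simp only [rowInsertWord, rowInsert_cons_of_le (h x (by simp)),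
      ih fun y hy => h y (by simp [hy])]

lemma tInsertWord_append (v w : List ℕ) (T : List (List ℕ)) :
    tInsertWord (v ++ w) T = tInsertWord w (tInsertWord v T) :=
  List.foldl_append

lemma P_append (v w : List ℕ) : P (v ++ w) = tInsertWord w (P v) :=
  List.foldl_append

lemma tInsert_cons (x : ℕ) (R : List ℕ) (rs : List (List ℕ)) :
    tInsert x (R :: rs) = (rowInsert x R).1 :: tInsertWord (rowInsert x R).2.toList rs := by
  rcases h : rowInsert x R with ⟨R', _ | y⟩ <;> simp [tInsert, tInsertWord, h]

lemma tInsertWord_cons (v R : List ℕ) (rs : List (List ℕ)) :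
    tInsertWord v (R :: rs) = (rowInsertWord v R).1 :: tInsertWord (rowInsertWord v R).2 rs := by
  induction v generalizing R rs with
  | nil => rfl
  | cons x v ih =>
    change tInsertWord v (tInsert x (R :: rs)) = _
    rw [tInsert_cons, ih, rowInsertWord, tInsertWord_append]

lemma tInsertWord_nil_eq (hv : v ≠ []) : tInsertWord v [] = tInsertWord v [[]] := by
  obtain ⟨x, v, rfl⟩ := List.exists_cons_of_ne_nil hv
  rfl

lemma pairwise_tInsert {x : ℕ} {T : List (List ℕ)} (hT : ∀ R ∈ T, R.Pairwise (· ≤ ·)) :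
    ∀ R ∈ tInsert x T, R.Pairwise (· ≤ ·) := by
  induction T generalizing x with
  | nil => simp [tInsert]
  | cons R rs ih =>
    have hrs : ∀ S ∈ rs, S.Pairwise (· ≤ ·) := fun S hS => hT S (by simp [hS])
    rw [tInsert_cons]
    intro R' hR'
    rcases List.mem_cons.1 hR' with rfl | hR'
    · exact pairwise_rowInsert (hT R (by simp)) rfl
    · rcases h : (rowInsert x R).2 with _ | y <;> rw [h] at hR'
      exacts [hrs R' hR', ih hrs R' hR']

lemma pairwise_tInsertWord {T : List (List ℕ)} (hT : ∀ R ∈ T, R.Pairwise (· ≤ ·)) :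
    ∀ R ∈ tInsertWord v T, R.Pairwise (· ≤ ·) := by
  induction v generalizing T with
  | nil => exact hT
  | cons x v ih => exact ih (pairwise_tInsert hT)

lemma pairwise_P (w : List ℕ) : ∀ R ∈ P w, R.Pairwise (· ≤ ·) :=
  pairwise_tInsertWord (v := w) (by simp)

end InsertWord

inductive KTriple : List ℕ → List ℕ → Prop
  | k1 {a b c : ℕ} : a ≤ b → b < c → KTriple [a, c, b] [c, a, b]
  | k2 {a b c : ℕ} : a < b → b ≤ c → KTriple [b, a, c] [b, c, a]

def KTripleOrEq (u v : List ℕ) : Prop := u = v ∨ KTriple u v ∨ KTriple v u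

section KnuthInvariance

variable {a b c : ℕ} {R : List ℕ}

lemma rowInsertWord_k1 (hab : a ≤ b) (hbc : b < c) (hR : R.Pairwise (· ≤ ·)) :
    (rowInsertWord [a, c, b] R).1 = (rowInsertWord [c, a, b] R).1 ∧
      KTripleOrEq (rowInsertWord [a, c, b] R).2 (rowInsertWord [c, a, b] R).2 := by
  induction R with
  | nil => simp (disch := omega) [KTripleOrEq, rowInsertWord]
  | cons r S ih =>
    rw [List.pairwise_cons] at hR
    rcases le_or_gt r a with hra | har
    · rw [rowInsertWord_cons_of_le (by simp; omega), rowInsertWord_cons_of_le (by simp; omega)]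
      obtain ⟨hrow, hbump⟩ := ih hR.2
      exact ⟨by rw [hrow], hbump⟩
    rcases lt_or_ge c r with hcr | hrc
    · cases S with
      | nil => simp (disch := omega) [KTripleOrEq, rowInsertWord]
      | cons s S =>
        have hrs : r ≤ s := hR.1 s (by simp)
        simp (disch := omega) [KTripleOrEq, rowInsertWord]
        exact .inr (.inr (.k2 hcr hrs))
    -- `c` and then `b` go into `S` on both sides; only the order of the bumps differs.
    rcases h1 : rowInsert c S with ⟨S1, _ | z⟩ <;>
      rcases h2 : rowInsert b S1 with ⟨S2, _ | y⟩ <;>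
      simp (disch := omega) [KTripleOrEq, rowInsertWord, h1, h2]
    · obtain ⟨_, _, h⟩ := exists_rowInsert_eq_some (self_mem_of_rowInsert_eq_some h1) hbc
      simp [h2] at h
    · have hyc : y ≤ c :=
        le_of_rowInsert_eq_some (pairwise_rowInsert hR.2 h1) h2
          (self_mem_of_rowInsert_eq_some h1) hbc
      have hry : r ≤ y := by
        rcases mem_of_mem_rowInsert h1 (mem_of_rowInsert_eq_some h2) with rfl | hy
        exacts [hrc, hR.1 y hy]
      exact .inr (.inl (.k1 hry (hyc.trans_lt (lt_of_rowInsert_eq_some h1))))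

lemma rowInsertWord_k2 (hab : a < b) (hbc : b ≤ c) (hR : R.Pairwise (· ≤ ·)) :
    (rowInsertWord [b, a, c] R).1 = (rowInsertWord [b, c, a] R).1 ∧
      KTripleOrEq (rowInsertWord [b, a, c] R).2 (rowInsertWord [b, c, a] R).2 := by
  induction R with
  | nil => simp (disch := omega) [KTripleOrEq, rowInsertWord]
  | cons r S ih =>
    rw [List.pairwise_cons] at hR
    rcases le_or_gt r a with hra | har
    · rw [rowInsertWord_cons_of_le (by simp; omega), rowInsertWord_cons_of_le (by simp; omega)]
      obtain ⟨hrow, hbump⟩ := ih hR.2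
      exact ⟨by rw [hrow], hbump⟩
    rcases lt_or_ge b r with hbr | hrb
    · rcases h1 : rowInsert c S with ⟨S1, _ | z⟩ <;>
        simp (disch := omega) [KTripleOrEq, rowInsertWord, h1]
      exact .inr (.inl (.k2 hbr (hR.1 z (mem_of_rowInsert_eq_some h1))))
    rcases h1 : rowInsert b S with ⟨S1, _ | z⟩ <;>
      rcases h2 : rowInsert c S1 with ⟨S2, _ | w⟩ <;>
      simp (disch := omega) [KTripleOrEq, rowInsertWord, h1, h2]
    · have hS : ∀ s ∈ S, s ≤ b := forall_le_of_rowInsert_eq_none h1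
      rw [rowInsert_of_forall_le hS, Prod.mk.injEq] at h1
      rw [← h1.1, rowInsert_of_forall_le] at h2
      · simp at h2
      · simpa [or_imp, forall_and] using ⟨fun s hs => (hS s hs).trans hbc, hbc⟩
    · have hcw := lt_of_rowInsert_eq_some h2
      have hwS : w ∈ S := (mem_of_mem_rowInsert h1 (mem_of_rowInsert_eq_some h2)).resolve_left
        (by omega)
      exact .inr (.inl (.k2 (hrb.trans_lt (lt_of_rowInsert_eq_some h1))
        (le_of_rowInsert_eq_some hR.2 h1 hwS (by omega))))

lemma rowInsertWord_of_kTriple {t t' : List ℕ} (h : KTriple t t') (hR : R.Pairwise (· ≤ ·)) :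
    (rowInsertWord t R).1 = (rowInsertWord t' R).1 ∧
      KTripleOrEq (rowInsertWord t R).2 (rowInsertWord t' R).2 := by
  cases h with
  | k1 hab hbc => exact rowInsertWord_k1 hab hbc hR
  | k2 hab hbc => exact rowInsertWord_k2 hab hbc hR

lemma tInsertWord_eq_of_kTriple {t t' : List ℕ} (h : KTriple t t') {T : List (List ℕ)}
    (hT : ∀ R ∈ T, R.Pairwise (· ≤ ·)) : tInsertWord t T = tInsertWord t' T := by
  induction T generalizing t t' with
  | nil =>
    cases h <;> simp (disch := omega) [tInsertWord, tInsert]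
  | cons R rs ih =>
    have hrs : ∀ S ∈ rs, S.Pairwise (· ≤ ·) := fun S hS => hT S (by simp [hS])
    rw [tInsertWord_cons, tInsertWord_cons]
    obtain ⟨hrow, hb | hb | hb⟩ := rowInsertWord_of_kTriple h (hT R (by simp))
    · rw [hrow, hb]
    · rw [hrow, ih hb hrs]
    · rw [hrow, ih hb hrs]

end KnuthInvariance

lemma P_eq_of_kStep {v w : List ℕ} (h : KStep v w) : P v = P w := by
  cases h with
  | k1 x y a b c hab hbc =>
    rw [P_append, P_append, P_append, P_append,
      tInsertWord_eq_of_kTriple (.k1 hab hbc) (pairwise_P x)]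
  | k2 x y a b c hab hbc =>
    rw [P_append, P_append, P_append, P_append,
      tInsertWord_eq_of_kTriple (.k2 hab hbc) (pairwise_P x)]

lemma P_eq_of_kEquiv {v w : List ℕ} (h : KEquiv v w) : P v = P w := by
  induction h with
  | rel _ _ h => exact P_eq_of_kStep h
  | refl => rfl
  | symm _ _ _ ih => exact ih.symm
  | trans _ _ _ _ _ ih₁ ih₂ => exact ih₁.trans ih₂

section ReadingWord

lemma KEquiv.refl (w : List ℕ) : KEquiv w w := Relation.EqvGen.refl w

lemma KEquiv.symm {v w : List ℕ} (h : KEquiv v w) : KEquiv w v := Relation.EqvGen.symm _ _ h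

lemma KEquiv.trans {u v w : List ℕ} (h₁ : KEquiv u v) (h₂ : KEquiv v w) : KEquiv u w :=
  Relation.EqvGen.trans _ _ _ h₁ h₂

lemma KEquiv.of_kStep {v w : List ℕ} (h : KStep v w) : KEquiv v w := Relation.EqvGen.rel _ _ h

lemma KEquiv.map {f : List ℕ → List ℕ} (hf : ∀ v w, KStep v w → KStep (f v) (f w))
    {v w : List ℕ} (h : KEquiv v w) : KEquiv (f v) (f w) := by
  induction h with
  | rel _ _ h => exact .of_kStep (hf _ _ h)
  | refl => exact .refl _
  | symm _ _ _ ih => exact ih.symm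
  | trans _ _ _ _ _ ih₁ ih₂ => exact ih₁.trans ih₂

lemma KEquiv.append_left (p : List ℕ) {v w : List ℕ} (h : KEquiv v w) :
    KEquiv (p ++ v) (p ++ w) := by
  refine h.map (f := (p ++ ·)) fun v w h => ?_
  cases h with
  | k1 x y a b c hab hbc => simpa using KStep.k1 (p ++ x) y a b c hab hbc
  | k2 x y a b c hab hbc => simpa using KStep.k2 (p ++ x) y a b c hab hbc

lemma KEquiv.append_right (p : List ℕ) {v w : List ℕ} (h : KEquiv v w) :
    KEquiv (v ++ p) (w ++ p) := by
  refine h.map (f := (· ++ p)) fun v w h => ?_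
  cases h with
  | k1 x y a b c hab hbc => simpa using KStep.k1 x (y ++ p) a b c hab hbc
  | k2 x y a b c hab hbc => simpa using KStep.k2 x (y ++ p) a b c hab hbc

variable {x r : ℕ} {S : List ℕ}

lemma kEquiv_cons_append_singleton (hxr : x < r) (hS : ∀ s ∈ S, r ≤ s)
    (hS' : S.Pairwise (· ≤ ·)) : KEquiv (r :: (S ++ [x])) (r :: x :: S) := by
  induction S generalizing r with
  | nil => exact .refl _
  | cons s S ih =>
    rw [List.pairwise_cons] at hS'
    have hrs : r ≤ s := hS s (by simp)
    have hswap : KEquiv (r :: s :: x :: S) (r :: x :: s :: S) := by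
      simpa using (KEquiv.of_kStep (KStep.k2 [] S x r s hxr hrs)).symm
    exact ((ih (hxr.trans_le hrs) hS'.1 hS'.2).append_left [r]).trans hswap

lemma kEquiv_rowInsert (hS : S.Pairwise (· ≤ ·)) :
    KEquiv (S ++ [x]) ((rowInsert x S).2.toList ++ (rowInsert x S).1) := by
  induction S with
  | nil => exact .refl _
  | cons r S ih =>
    rw [List.pairwise_cons] at hS
    rcases lt_or_ge x r with hxr | hrx
    · rw [rowInsert_cons_of_lt hxr]
      simpa using kEquiv_cons_append_singleton hxr hS.1 hS.2
    rw [rowInsert_cons_of_le hrx]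
    rcases h : rowInsert x S with ⟨S', _ | y⟩
    · simpa [h] using (ih hS.2).append_left [r]
    have hxS' := self_mem_of_rowInsert_eq_some h
    obtain ⟨s, S'', rfl⟩ := List.exists_cons_of_ne_nil (List.ne_nil_of_mem hxS')
    have hsx : s ≤ x := by
      rcases List.mem_cons.1 hxS' with rfl | hx
      exacts [le_rfl, List.rel_of_pairwise_cons (pairwise_rowInsert hS.2 h) hx]
    have hrs : r ≤ s := by
      rcases mem_of_mem_rowInsert h (List.mem_cons_self) with rfl | hs
      exacts [hrx, hS.1 s hs]
    have hswap : KEquiv (r :: y :: s :: S'') (y :: r :: s :: S'') := by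
      simpa using KEquiv.of_kStep (KStep.k1 [] S'' r s y hrs
        (hsx.trans_lt (lt_of_rowInsert_eq_some h)))
    have ih' : KEquiv (r :: (S ++ [x])) (r :: y :: s :: S'') := by
      simpa [h] using (ih hS.2).append_left [r]
    simpa using ih'.trans hswap

lemma kEquiv_readWord_tInsert {T : List (List ℕ)} (hT : ∀ R ∈ T, R.Pairwise (· ≤ ·)) :
    KEquiv (tInsert x T).reverse.flatten (T.reverse.flatten ++ [x]) := by
  induction T generalizing x with
  | nil => exact .refl _
  | cons R rs ih =>
    have hrs : ∀ S ∈ rs, S.Pairwise (· ≤ ·) := fun S hS => hT S (by simp [hS])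
    have hbump : KEquiv (tInsertWord (rowInsert x R).2.toList rs).reverse.flatten
        (rs.reverse.flatten ++ (rowInsert x R).2.toList) := by
      rcases (rowInsert x R).2 with _ | y
      exacts [by simpa [tInsertWord] using .refl _, ih hrs]
    have hrow := (kEquiv_rowInsert (x := x) (hT R (by simp))).symm.append_left rs.reverse.flatten
    rw [tInsert_cons]
    simpa using (hbump.append_right _).trans (by rw [List.append_assoc]; exact hrow)

lemma kEquiv_readWord_P (w : List ℕ) : KEquiv w (P w).reverse.flatten := by
  induction w using List.reverseRecOn with
  | nil => exact .refl _
  | append_singleton w x ih =>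
    rw [P_append]
    exact (ih.append_right [x]).trans (kEquiv_readWord_tInsert (pairwise_P w)).symm

end ReadingWord

theorem kEquiv_iff_P_eq {v w : List ℕ} : KEquiv v w ↔ P v = P w :=
  ⟨P_eq_of_kEquiv, fun h => (kEquiv_readWord_P v).trans (h ▸ (kEquiv_readWord_P w).symm)⟩

/-- The decreasing word `[k + n - 1, …, k + 1, k]`. -/
def decWord : ℕ → ℕ → List ℕ
  | _, 0 => []
  | k, n + 1 => decWord (k + 1) n ++ [k]

def prependColumn : ℕ → ℕ → List (List ℕ) → List (List ℕ)
  | _, 0, T => T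
  | k, n + 1, [] => [k] :: prependColumn (k + 1) n []
  | k, n + 1, R :: rs => (k :: R) :: prependColumn (k + 1) n rs

def RowLowerBound (k : ℕ) (T : List (List ℕ)) : Prop :=
  ∀ i, ∀ y ∈ T.getD i [], k + i ≤ y

section DecreasingWord

variable {k n : ℕ} {R : List ℕ} {T : List (List ℕ)}

lemma decWord_eq_map_range (k n : ℕ) :
    decWord k n = (List.range n).map (fun i => k + n - 1 - i) := by
  induction n generalizing k with
  | zero => rfl
  | succ n ih =>
    rw [decWord, ih, List.range_succ, List.map_append]
    congr 1
    · exact List.map_congr_left fun i _ => by omega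
    · simp

lemma rowLowerBound_tInsert {x : ℕ} (hx : k ≤ x) (hT : RowLowerBound k T) :
    RowLowerBound k (tInsert x T) := by
  induction T generalizing k x with
  | nil =>
    rintro (_ | i) y hy
    · simp_all [tInsert]
    · simp [tInsert] at hy
  | cons R rs ih =>
    rw [tInsert_cons]
    rintro (_ | i) y hy
    · rcases mem_of_mem_rowInsert rfl hy with rfl | hy
      exacts [hx, hT 0 y hy]
    rcases h : rowInsert x R with ⟨R', _ | z⟩ <;> rw [h] at hy
    · exact hT (i + 1) y hy
    · have hrs : RowLowerBound (k + 1) rs := fun j y hy => by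
        have := hT (j + 1) y hy
        omega
      have := ih (hx.trans_lt (lt_of_rowInsert_eq_some h)) hrs i y
        (by simpa [tInsertWord] using hy)
      omega

lemma rowLowerBound_tInsertWord {v : List ℕ} (hv : ∀ x ∈ v, k ≤ x)
    (hT : RowLowerBound k T) : RowLowerBound k (tInsertWord v T) := by
  induction v generalizing T with
  | nil => exact hT
  | cons x v ih =>
    exact ih (fun y hy => hv y (by simp [hy])) (rowLowerBound_tInsert (hv x (by simp)) hT)

lemma rowLowerBound_P {w : List ℕ} (hw : ∀ x ∈ w, k ≤ x) : RowLowerBound k (P w) :=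
  rowLowerBound_tInsertWord hw (by simp [RowLowerBound])

lemma prependColumn_nil (k n : ℕ) :
    prependColumn k (n + 1) [] = prependColumn k (n + 1) [[]] := rfl

lemma tInsert_prependColumn {x : ℕ} (hx : k ≤ x) :
    tInsert x (prependColumn k n T) = prependColumn k n (tInsert x T) := by
  induction n generalizing k x T with
  | zero => rfl
  | succ n ih =>
    have hcons : ∀ R rs, tInsert x (prependColumn k (n + 1) (R :: rs)) =
        prependColumn k (n + 1) (tInsert x (R :: rs)) := fun R rs => by
      change tInsert x ((k :: R) :: _) = _
      rw [tInsert_cons, tInsert_cons, rowInsert_cons_of_le hx]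
      rcases h : rowInsert x R with ⟨R', _ | y⟩
      · rfl
      · exact congrArg _ (ih (hx.trans_lt (lt_of_rowInsert_eq_some h)))
    rcases T with _ | ⟨R, rs⟩
    exacts [hcons [] [], hcons R rs]

lemma tInsertWord_prependColumn {v : List ℕ} (hv : ∀ x ∈ v, k ≤ x) :
    tInsertWord v (prependColumn k n T) = prependColumn k n (tInsertWord v T) := by
  induction v generalizing T with
  | nil => rfl
  | cons x v ih =>
    exact (congrArg _ (tInsert_prependColumn (hv x (by simp)))).trans
      (ih fun y hy => hv y (by simp [hy]))

lemma rowInsertWord_decWord_perm (hR : R.Pairwise (· ≤ ·)) (hRle : ∀ r ∈ R, r ≤ k + n) :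
    (rowInsertWord (decWord k (n + 1)) R).2 = decWord (k + 1) n ∧
      (rowInsertWord (decWord k (n + 1)) R).1.Perm (k :: R) := by
  induction n generalizing k with
  | zero => simp [decWord, rowInsertWord, rowInsert_of_forall_le (by simpa using hRle)]
  | succ n ih =>
    obtain ⟨hbump, hperm⟩ := ih (k := k + 1) (fun r hr => (hRle r hr).trans_eq (by omega))
    have hmem : k + 1 ∈ (rowInsertWord (decWord (k + 1) (n + 1)) R).1 :=
      hperm.mem_iff.2 List.mem_cons_self
    obtain ⟨R', y, h⟩ := exists_rowInsert_eq_some hmem (Nat.lt_succ_self k)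
    have hy : y = k + 1 := le_antisymm
      (le_of_rowInsert_eq_some (pairwise_rowInsertWord hR) h hmem (Nat.lt_succ_self k))
      (lt_of_rowInsert_eq_some h)
    have hR' : R'.Perm (k :: R) := by
      have := rowInsert_perm k (rowInsertWord (decWord (k + 1) (n + 1)) R).1
      rw [h, hy] at this
      exact (this.trans ((hperm.cons k).trans (List.Perm.swap _ _ _))).cons_inv
    rw [decWord, rowInsertWord_append]
    simp only [rowInsertWord, h, hbump, hy]
    exact ⟨rfl, hR'⟩

lemma rowInsertWord_decWord (hR : R.Pairwise (· ≤ ·)) (hkR : ∀ r ∈ R, k ≤ r)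
    (hRle : ∀ r ∈ R, r ≤ k + n) :
    rowInsertWord (decWord k (n + 1)) R = (k :: R, decWord (k + 1) n) := by
  obtain ⟨hbump, hperm⟩ := rowInsertWord_decWord_perm hR hRle
  exact Prod.ext (hperm.eq_of_pairwise' (pairwise_rowInsertWord hR)
    (List.pairwise_cons.2 ⟨hkR, hR⟩)) hbump

lemma length_rowInsertWord_decWord (h : ∃ r ∈ R, k + n < r) :
    (rowInsertWord (decWord k (n + 1)) R).1.length = R.length ∧
      k ∈ (rowInsertWord (decWord k (n + 1)) R).1 := by
  induction n generalizing k with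
  | zero =>
    obtain ⟨r, hr, hkr⟩ := h
    obtain ⟨R', y, h⟩ := exists_rowInsert_eq_some (x := k) hr (by simpa using hkr)
    have hlen := length_of_rowInsert_eq_some h
    have hk := self_mem_of_rowInsert_eq_some h
    simpa [decWord, rowInsertWord, h] using ⟨hlen, hk⟩
  | succ n ih =>
    obtain ⟨r, hr, hkr⟩ := h
    obtain ⟨hlen, hmem⟩ := ih (k := k + 1) ⟨r, hr, by omega⟩
    obtain ⟨R', y, h⟩ := exists_rowInsert_eq_some hmem (Nat.lt_succ_self k)
    have hlen' := length_of_rowInsert_eq_some h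
    have hk := self_mem_of_rowInsert_eq_some h
    rw [decWord, rowInsertWord_append]
    simp only [rowInsertWord, h]
    exact ⟨hlen'.trans hlen, hk⟩

lemma rowInsertWord_decWord_fst_eq_cons_iff (hR : R.Pairwise (· ≤ ·)) (hkR : ∀ r ∈ R, k ≤ r) :
    (rowInsertWord (decWord k (n + 1)) R).1 = k :: R ↔ ∀ r ∈ R, r ≤ k + n := by
  refine ⟨fun h => ?_, fun h => by rw [rowInsertWord_decWord hR hkR h]⟩
  by_contra hR
  push Not at hR
  simpa [h] using (length_rowInsertWord_decWord hR).1

lemma tInsertWord_decWord_eq_prependColumn_iff (hT : ∀ R ∈ T, R.Pairwise (· ≤ ·))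
    (hlow : RowLowerBound k T) :
    tInsertWord (decWord k n) T = prependColumn k n T ↔
      ∀ i < n, ∀ x ∈ T.getD i [], x < k + n := by
  induction n generalizing k T with
  | zero => simp [decWord, prependColumn, tInsertWord]
  | succ n ih =>
    have hcons : ∀ R rs, (∀ R' ∈ R :: rs, R'.Pairwise (· ≤ ·)) → RowLowerBound k (R :: rs) →
        (tInsertWord (decWord k (n + 1)) (R :: rs) = prependColumn k (n + 1) (R :: rs) ↔
          ∀ i < n + 1, ∀ x ∈ (R :: rs).getD i [], x < k + (n + 1)) := by
      intro R rs hT hlow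
      have hR := hT R (by simp)
      have hkR : ∀ r ∈ R, k ≤ r := fun r hr => by simpa using hlow 0 r hr
      have hrs : RowLowerBound (k + 1) rs := fun j y hy => by
        have := hlow (j + 1) y hy
        omega
      rw [tInsertWord_cons, Nat.forall_lt_succ_left]
      change _ :: _ = (k :: R) :: prependColumn (k + 1) n rs ↔ _
      simp only [List.cons.injEq, rowInsertWord_decWord_fst_eq_cons_iff hR hkR,
        List.getD_cons_zero, List.getD_cons_succ, ← add_assoc, Nat.lt_add_one_iff]
      refine and_congr_right fun hRle => ?_
      rw [rowInsertWord_decWord hR hkR hRle, ih (fun R' hR' => hT R' (by simp [hR'])) hrs,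
        Nat.add_right_comm]
      simp only [Nat.lt_add_one_iff]
    rcases T with _ | ⟨R, rs⟩
    · rw [tInsertWord_nil_eq (by simp [decWord]), prependColumn_nil,
        hcons [] [] (by simp) (by rintro (_ | i) <;> simp)]
      constructor <;> rintro - (_ | i) - x hx <;> simp at hx
    · exact hcons R rs hT hlow

lemma P_decWord_append {w : List ℕ} (hw : ∀ x ∈ w, k ≤ x) :
    P (decWord k n ++ w) = prependColumn k n (P w) := by
  have hcol : P (decWord k n) = prependColumn k n [] :=
    (tInsertWord_decWord_eq_prependColumn_iff (by simp) (by simp [RowLowerBound])).2 (by simp)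
  rw [P_append, hcol, tInsertWord_prependColumn hw]
  rfl

end DecreasingWord

end Plactic

open Plactic in
theorem stmt_13_general (m : ℕ) (w : List ℕ) (hw : ∀ x ∈ w, 0 < x) :
    w ∈ Cent ((List.range m).map (fun i => m - i)) ↔
      ∀ i < m, ∀ x ∈ row w i, x ≤ m := by
  have hu : (List.range m).map (fun i => m - i) = decWord 1 m := by
    simp [decWord_eq_map_range]
  rw [hu, Cent, Set.mem_ofPred_eq, kEquiv_iff_P_eq, P_decWord_append hw, P_append, eq_comm,
    tInsertWord_decWord_eq_prependColumn_iff (pairwise_P w) (rowLowerBound_P hw)]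
  simp [row, add_comm 1 m]

open Plactic in
theorem stmt_13 (m : ℕ) (hm : 0 < m) (w : List ℕ) (hw : ∀ x ∈ w, 0 < x) :
    w ∈ Cent ((List.range m).map (fun i => m - i)) ↔
      ∀ i < m, ∀ x ∈ row w i, x ≤ m :=
  stmt_13_general m w hw
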